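/- Entropy bound from area theorem argument (inequality 4.4/eq. ar_4): for a uniformly chosen codeword X of an (n,k) code observed through degraded erasure channels Y(ε) → Y(ε₀) with ε < ε₀, the EXIT function satisfies n·h(ε) ≤ H(X | Y(ε₀))/(ε₀ − ε), where h(ε) = (1/n)·Σᵢ H(Xᵢ | Y_{∼i}(ε)). -/

import Mathlib

open scoped Classical

/-- Probability of the event `{X = b}` under the pmf `p` on a finite sample space. -/
noncomputable def prOf {Ω B : Type*} [Fintype Ω] (p : Ω → ℝ) (X : Ω → B) (b : B) : ℝ :=
  ∑ ω, if X ω = b then p ω else 0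

/-- Conditional Shannon entropy `H(X|Y)` (base 2) of finite random variables given by
functions on a finite sample space with pmf `p`:
`H(X|Y) = Σ_ω p(ω)·log₂(P[Y = Y(ω)] / P[X = X(ω), Y = Y(ω)])`. -/
noncomputable def condEnt {Ω B C : Type*} [Fintype Ω] (p : Ω → ℝ)
    (X : Ω → B) (Y : Ω → C) : ℝ :=
  ∑ ω, p ω * Real.logb 2 (prOf p Y (Y ω) / prOf p (fun ω => (X ω, Y ω)) (X ω, Y ω))

/-- Joint pmf of (uniform codeword of `C`, coupled erasure statuses):
status `0` = not erased in either channel output, status `1` = erased only at level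
`ε₀`, status `2` = erased at both levels; so coordinatewise the `ε`-output erases with
probability `ε` and the `ε₀`-output is its degradation erasing with probability `ε₀`. -/
noncomputable def pCode (n : ℕ) (C : Finset (Fin n → ZMod 2)) (ε ε₀ : ℝ)
    (ω : (Fin n → ZMod 2) × (Fin n → Fin 3)) : ℝ :=
  (if ω.1 ∈ C then (1 : ℝ) / C.card else 0) *
    ∏ j, (if ω.2 j = 2 then ε else if ω.2 j = 1 then ε₀ - ε else 1 - ε₀)

/-- The channel output `Y(ε)`. -/
noncomputable def Yeps (n : ℕ) (ω : (Fin n → ZMod 2) × (Fin n → Fin 3)) :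
    Fin n → Option (ZMod 2) :=
  fun j => if ω.2 j = 2 then none else some (ω.1 j)

/-- The degraded channel output `Y(ε₀)`. -/
noncomputable def Yeps0 (n : ℕ) (ω : (Fin n → ZMod 2) × (Fin n → Fin 3)) :
    Fin n → Option (ZMod 2) :=
  fun j => if ω.2 j = 0 then some (ω.1 j) else none

/-- `Y_{∼i}(ε)`: the output `Y(ε)` with coordinate `i` replaced by an erasure. -/
noncomputable def Ynot (n : ℕ) (i : Fin n) (ω : (Fin n → ZMod 2) × (Fin n → Fin 3)) :
    Fin n → Option (ZMod 2) :=
  fun j => if j = i then none else Yeps n ω j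

/-!
With `A` the coordinates seen by `Y(ε)` and `A₀ ⊆ A` those seen by `Y(ε₀)`, both sides are
averages over the erasure statuses of entropies `H(X | X_B)`: `H(X | Y(ε₀)) = 𝔼 H(X | X_{A₀})`
and `H(Xᵢ | Y_{∼i}(ε)) = 𝔼 [H(X | X_{A∖i}) - H(X | X_{A∪i})]`. The latter does not involve the
status of `i`, which is "seen by `Y(ε)` only" with probability `ε₀ - ε`; hence `(ε₀ - ε)·n·h(ε)`
is the expected sum of the increments `H(X | X_{A∖i}) - H(X | X_A)` over `i ∈ A ∖ A₀`.
As `B ↦ H(X | X_B)` is supermodular (for `X` uniform on a code this is a counting inequality,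
through `log r ≤ r - 1`), these increments are dominated by those along a chain from `A` down
to `A₀`, which telescope to `H(X | X_{A₀}) - H(X | X_A) ≤ H(X | X_{A₀})`.
-/

open Finset

theorem sum_card_mul_card_div_le {ι κ μ : Type*} [Fintype κ] [Fintype μ]
    (D : Finset ι) (α : ι → κ) (β : ι → μ) :
    ∑ x ∈ D, (#{y ∈ D | α y = α x} * #{y ∈ D | β y = β x} : ℝ) /
      (#D * #{y ∈ D | α y = α x ∧ β y = β x}) ≤ #D := by
  set a : κ → ℝ := fun u => #{y ∈ D | α y = u}
  set b : μ → ℝ := fun v => #{y ∈ D | β y = v}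
  set c : κ × μ → ℝ := fun p => #{y ∈ D | (α y, β y) = p}
  have hgroup : ∑ x ∈ D, (#{y ∈ D | α y = α x} * #{y ∈ D | β y = β x} : ℝ) /
      (#D * #{y ∈ D | α y = α x ∧ β y = β x})
      = ∑ p : κ × μ, c p * (a p.1 * b p.2 / (#D * c p)) := by
    have hc : ∀ x, #{y ∈ D | α y = α x ∧ β y = β x} = c (α x, β x) := by
      intro x; simp only [c, Prod.ext_iff]
    simp only [hc]
    rw [← sum_fiberwise_of_maps_to (g := fun x => (α x, β x)) (t := univ)
      (fun x _ => mem_univ _)]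
    refine sum_congr rfl fun ⟨u, v⟩ _ => ?_
    have hconst : ∀ x ∈ D.filter (fun x => (α x, β x) = (u, v)),
        (#{y ∈ D | α y = α x} * #{y ∈ D | β y = β x} : ℝ) / (#D * c (α x, β x))
          = a u * b v / (#D * c (u, v)) := by
      intro x hx
      obtain ⟨rfl, rfl⟩ := Prod.mk_inj.1 (mem_filter.1 hx).2
      rfl
    rw [sum_congr rfl hconst, sum_const, nsmul_eq_mul]
  have hsum_a : ∑ u, a u = #D := by
    simp only [a, ← Nat.cast_sum]
    exact_mod_cast (card_eq_sum_card_fiberwise fun x _ => mem_univ (α x)).symm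
  have hsum_b : ∑ v, b v = #D := by
    simp only [b, ← Nat.cast_sum]
    exact_mod_cast (card_eq_sum_card_fiberwise fun x _ => mem_univ (β x)).symm
  calc _ = ∑ p : κ × μ, c p * (a p.1 * b p.2 / (#D * c p)) := hgroup
    _ ≤ ∑ p : κ × μ, a p.1 * b p.2 / #D := by
      refine sum_le_sum fun p _ => ?_
      rcases eq_or_ne (c p) 0 with h | h
      · rw [h, zero_mul]; positivity
      · exact le_of_eq (by field_simp)
    _ = (∑ u, a u) * (∑ v, b v) / #D := by
      rw [sum_mul_sum, ← Fintype.sum_prod_type', sum_div]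
    _ = #D := by
      rw [hsum_a, hsum_b]
      rcases eq_or_ne (#D : ℝ) 0 with h | h
      · simp [h]
      · field_simp

theorem sum_card_mul_card_div_le_of_coarser {ι κ μ ν : Type*}
    [Fintype κ] [Fintype μ] [Fintype ν]
    (C : Finset ι) (α : ι → κ) (β : ι → μ) (γ : ι → ν)
    (hα : ∀ x y, α x = α y → γ x = γ y) (hβ : ∀ x y, β x = β y → γ x = γ y) :
    ∑ x ∈ C, (#{y ∈ C | α y = α x} * #{y ∈ C | β y = β x} : ℝ) /
      (#{y ∈ C | γ y = γ x} * #{y ∈ C | α y = α x ∧ β y = β x}) ≤ #C := by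
  rw [← sum_fiberwise_of_maps_to (g := γ) (t := univ) fun x _ => mem_univ _]
  calc _ ≤ ∑ g : ν, (#{x ∈ C | γ x = g} : ℝ) := sum_le_sum fun g _ => ?_
    _ = #C := by exact_mod_cast (card_eq_sum_card_fiberwise fun x _ => mem_univ (γ x)).symm
  set D := C.filter (γ · = g)
  have hfiber : ∀ x ∈ D, ∀ (P : ι → Prop) [DecidablePred P],
      (∀ y, P y → γ y = γ x) → C.filter P = D.filter P := by
    intro x hx P _ hP
    ext y
    simp only [D, mem_filter, and_assoc]
    exact and_congr_right fun _ =>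
      ⟨fun h => ⟨(hP y h).trans (mem_filter.1 hx).2, h⟩, And.right⟩
  refine le_trans (le_of_eq (sum_congr rfl fun x hx => ?_)) (sum_card_mul_card_div_le D α β)
  rw [hfiber x hx _ fun y h => hα y x h, hfiber x hx _ fun y h => hβ y x h,
    hfiber x hx _ fun y h => h, hfiber x hx _ fun y h => hα y x h.1,
    filter_true_of_mem (p := fun y => γ y = γ x) fun y hy =>
      (mem_filter.1 hy).2.trans (mem_filter.1 hx).2.symm]

section CodeEntropy

variable {ι F : Type*} (C : Finset (ι → F))

noncomputable def agreeCard (A : Finset ι) (x : ι → F) : ℕ :=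
  #{y ∈ C | ∀ j ∈ A, y j = x j}

/-- `H(X | X_A)` for `X` uniform on `C`. -/
noncomputable def codeCondEnt (A : Finset ι) : ℝ :=
  (∑ x ∈ C, Real.logb 2 (agreeCard C A x)) / #C

variable {C}

theorem one_le_agreeCard {x : ι → F} (hx : x ∈ C) (A : Finset ι) :
    (1 : ℝ) ≤ agreeCard C A x := by
  exact_mod_cast card_pos.2 ⟨x, mem_filter.2 ⟨hx, fun _ _ => rfl⟩⟩

variable (C)

theorem codeCondEnt_nonneg (A : Finset ι) : 0 ≤ codeCondEnt C A :=
  div_nonneg (sum_nonneg fun _ hx => Real.logb_nonneg one_lt_two (one_le_agreeCard hx A))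
    (Nat.cast_nonneg _)

theorem codeCondEnt_univ [Fintype ι] : codeCondEnt C univ = 0 := by
  have h : ∀ x ∈ C, agreeCard C univ x = 1 := by
    intro x hx
    simp [agreeCard, ← funext_iff, filter_eq', hx]
  rw [codeCondEnt, sum_congr rfl fun x hx => by rw [h x hx, Nat.cast_one, Real.logb_one]]
  simp

theorem restrict_eq_restrict_iff {S : Finset ι} {x y : ι → F} :
    S.restrict y = S.restrict x ↔ ∀ j ∈ S, y j = x j := by
  simp [funext_iff, Finset.restrict]

theorem sum_agreeCard_mul_div_le [DecidableEq ι] [Fintype F] (S T : Finset ι) :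
    ∑ x ∈ C, (agreeCard C S x * agreeCard C T x : ℝ) /
      (agreeCard C (S ∩ T) x * agreeCard C (S ∪ T) x) ≤ #C := by
  have h := sum_card_mul_card_div_le_of_coarser C S.restrict T.restrict (S ∩ T).restrict
    (fun x y h => restrict_eq_restrict_iff.2 fun j hj =>
      restrict_eq_restrict_iff.1 h j (mem_of_mem_inter_left hj))
    (fun x y h => restrict_eq_restrict_iff.2 fun j hj =>
      restrict_eq_restrict_iff.1 h j (mem_of_mem_inter_right hj))
  simpa only [agreeCard, restrict_eq_restrict_iff, ← forall_mem_union] using h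

theorem codeCondEnt_add_codeCondEnt_le [DecidableEq ι] [Fintype F] (S T : Finset ι) :
    codeCondEnt C S + codeCondEnt C T ≤ codeCondEnt C (S ∩ T) + codeCondEnt C (S ∪ T) := by
  set N := agreeCard C
  have hpoint : ∀ x ∈ C,
      Real.logb 2 (N S x) + Real.logb 2 (N T x) - Real.logb 2 (N (S ∩ T) x)
        - Real.logb 2 (N (S ∪ T) x)
      ≤ ((N S x * N T x : ℝ) / (N (S ∩ T) x * N (S ∪ T) x) - 1) / Real.log 2 := by
    intro x hx
    have hpos : ∀ A, (0 : ℝ) < N A x := fun A => one_pos.trans_le (one_le_agreeCard hx A)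
    have hST := mul_pos (hpos S) (hpos T)
    rw [← Real.logb_mul (hpos S).ne' (hpos T).ne', ← Real.logb_div hST.ne' (hpos _).ne',
      ← Real.logb_div (div_pos hST (hpos _)).ne' (hpos _).ne', div_div]
    exact div_le_div_of_nonneg_right
      (Real.log_le_sub_one_of_pos (div_pos hST (mul_pos (hpos _) (hpos _))))
      (Real.log_nonneg one_le_two)
  have hsum : ∑ x ∈ C, (Real.logb 2 (N S x) + Real.logb 2 (N T x) - Real.logb 2 (N (S ∩ T) x)
      - Real.logb 2 (N (S ∪ T) x)) ≤ 0 := by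
    refine (sum_le_sum hpoint).trans ?_
    rw [← sum_div, sum_sub_distrib, sum_const, nsmul_one]
    exact div_nonpos_of_nonpos_of_nonneg (sub_nonpos.2 (sum_agreeCard_mul_div_le C S T))
      (Real.log_nonneg one_le_two)
  simp only [codeCondEnt, ← add_div]
  refine div_le_div_of_nonneg_right ?_ (Nat.cast_nonneg _)
  simp only [sum_add_distrib, sum_sub_distrib] at hsum
  linarith

theorem sum_codeCondEnt_erase_sub_le [DecidableEq ι] [Fintype F] {A D : Finset ι} (hD : D ⊆ A) :
    ∑ j ∈ D, (codeCondEnt C (A.erase j) - codeCondEnt C A)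
      ≤ codeCondEnt C (A \ D) - codeCondEnt C A := by
  induction D using Finset.induction_on with
  | empty => simp
  | insert k D hk ih =>
    have hkA : k ∈ A \ D := mem_sdiff.2 ⟨hD (mem_insert_self k D), hk⟩
    have hsuper := codeCondEnt_add_codeCondEnt_le C (A \ D) (A.erase k)
    rw [show A \ D ∩ A.erase k = (A \ D).erase k by ext; simp; tauto,
      show A \ D ∪ A.erase k = A by ext j; by_cases j = k <;> simp_all] at hsuper
    rw [sum_insert hk, sdiff_insert]
    linarith [ih ((subset_insert k D).trans hD)]

end CodeEntropy

section Reveal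

variable {ι F : Type*}

noncomputable def reveal (E : Finset ι) (x : ι → F) : ι → Option F :=
  fun j => if j ∈ E then some (x j) else none

theorem reveal_eq_reveal_iff {E E' : Finset ι} {x x' : ι → F} :
    reveal E x = reveal E' x' ↔ E = E' ∧ ∀ j ∈ E, x j = x' j := by
  constructor
  · intro h
    have hj : ∀ j, reveal E x j = reveal E' x' j := fun j => congrFun h j
    refine ⟨Finset.ext fun j => ?_, fun j hj' => ?_⟩
    · have := hj j; simp only [reveal] at this; split_ifs at this <;> simp_all
    · have := hj j; simp_all [reveal]
  · rintro ⟨rfl, h⟩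
    funext j
    simp only [reveal]
    split_ifs with hj
    · rw [h j hj]
    · rfl

end Reveal

theorem prOf_mul_of_iff {α β γ : Type*} [Fintype α] [Fintype β] (u : α → ℝ) (q : β → ℝ)
    (Z : α × β → γ) (z : γ) (P : α → Prop) (Q : β → Prop)
    (h : ∀ a b, Z (a, b) = z ↔ P a ∧ Q b) :
    prOf (fun ω => u ω.1 * q ω.2) Z z = (∑ a with P a, u a) * ∑ b with Q b, q b := by
  simp only [prOf, Fintype.sum_prod_type, h, sum_filter, sum_mul_sum, ite_zero_mul_ite_zero]

section Uniform
variable {ι F : Type*} [Fintype ι] [DecidableEq ι] [Fintype F] (C : Finset (ι → F))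

noncomputable def unifOn (x : ι → F) : ℝ := if x ∈ C then 1 / #C else 0

theorem sum_unifOn_mul (f : (ι → F) → ℝ) :
    ∑ x, unifOn C x * f x = (∑ x ∈ C, f x) / #C := by
  simp only [unifOn, ite_mul, zero_mul, sum_ite_mem, univ_inter, sum_div]
  exact sum_congr rfl fun x _ => by ring

theorem sum_filter_unifOn (P : (ι → F) → Prop) :
    ∑ x with P x, unifOn C x = #{x ∈ C | P x} / #C := by
  simpa [sum_filter, ← ite_and, ite_mul, and_comm] using
    sum_unifOn_mul C fun x => if P x then 1 else 0

end Uniform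

theorem condEnt_reveal {ι F S β : Type*} [Fintype ι] [DecidableEq ι] [Fintype F] [Fintype S]
    (C : Finset (ι → F)) (q : S → ℝ) (hq : ∀ s, 0 ≤ q s) (E : S → Finset ι) (T : Finset ι)
    (X : (ι → F) × S → β) (hX : ∀ ω ω', X ω = X ω' ↔ ∀ j ∈ T, ω.1 j = ω'.1 j) :
    condEnt (fun ω => unifOn C ω.1 * q ω.2) X (fun ω => reveal (E ω.2) ω.1)
      = ∑ s, q s * (codeCondEnt C (E s) - codeCondEnt C (T ∪ E s)) := by
  set p := fun ω : (ι → F) × S => unifOn C ω.1 * q ω.2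
  set W : S → ℝ := fun s₀ => ∑ s with E s = E s₀, q s
  have hY : ∀ x₀ s₀, prOf p (fun ω => reveal (E ω.2) ω.1) (reveal (E s₀) x₀)
      = agreeCard C (E s₀) x₀ / #C * W s₀ := by
    intro x₀ s₀
    rw [prOf_mul_of_iff _ _ _ _ (fun x => ∀ j ∈ E s₀, x j = x₀ j) (fun s => E s = E s₀),
      sum_filter_unifOn]
    · simp only [W, agreeCard]
      congr
    intro x s
    rw [reveal_eq_reveal_iff]
    exact ⟨fun ⟨h, hx⟩ => ⟨h ▸ hx, h⟩, fun ⟨hx, h⟩ => ⟨h, h ▸ hx⟩⟩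
  have hXY : ∀ x₀ s₀, prOf p (fun ω => (X ω, reveal (E ω.2) ω.1))
      (X (x₀, s₀), reveal (E s₀) x₀) = agreeCard C (T ∪ E s₀) x₀ / #C * W s₀ := by
    intro x₀ s₀
    rw [prOf_mul_of_iff _ _ _ _ (fun x => ∀ j ∈ T ∪ E s₀, x j = x₀ j) (fun s => E s = E s₀),
      sum_filter_unifOn]
    · simp only [W, agreeCard]
      congr
    intro x s
    rw [Prod.mk.injEq, hX, reveal_eq_reveal_iff, forall_mem_union]
    exact ⟨fun ⟨hT, h, hx⟩ => ⟨⟨hT, h ▸ hx⟩, h⟩, fun ⟨⟨hT, hx⟩, h⟩ => ⟨hT, h, h ▸ hx⟩⟩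
  have hterm : ∀ x s, p (x, s) * Real.logb 2
        (prOf p (fun ω => reveal (E ω.2) ω.1) (reveal (E s) x) /
          prOf p (fun ω => (X ω, reveal (E ω.2) ω.1)) (X (x, s), reveal (E s) x))
      = q s * (unifOn C x *
          (Real.logb 2 (agreeCard C (E s) x) - Real.logb 2 (agreeCard C (T ∪ E s) x))) := by
    intro x s
    by_cases hx : x ∈ C
    · rcases (hq s).eq_or_lt with hs | hs
      · simp [p, ← hs]
      have hW : 0 < W s := hs.trans_le (single_le_sum (fun s _ => hq s) (by simp))
      have hpos : ∀ A, (0 : ℝ) < agreeCard C A x :=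
        fun A => one_pos.trans_le (one_le_agreeCard hx A)
      have hC : (#C : ℝ) ≠ 0 := (Nat.cast_pos.2 (card_pos.2 ⟨x, hx⟩)).ne'
      rw [hY, hXY, mul_div_mul_right _ _ hW.ne', div_div_div_cancel_right₀ hC,
        Real.logb_div (hpos _).ne' (hpos _).ne']
      ring
    · simp [p, unifOn, hx]
  simp only [condEnt, Fintype.sum_prod_type]
  rw [sum_comm]
  simp only [hterm, ← mul_sum, sum_unifOn_mul, codeCondEnt, ← sub_div, ← sum_sub_distrib]

theorem sum_prod_mul_ite_eq {ι κ : Type*} [Fintype ι] [DecidableEq ι] [Fintype κ] [DecidableEq κ]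
    (w : κ → ℝ) (hw : ∑ u, w u = 1) (i : ι) (v : κ) (g : (ι → κ) → ℝ)
    (hg : ∀ s s', (∀ j, j ≠ i → s j = s' j) → g s = g s') :
    ∑ s : ι → κ, (∏ j, w (s j)) * (if s i = v then g s else 0)
      = w v * ∑ s : ι → κ, (∏ j, w (s j)) * g s := by
  set Φ := Equiv.funSplitAt i κ
  have hsplit : ∀ f : (ι → κ) → ℝ, ∑ s, f s = ∑ u, ∑ t, f (Φ.symm (u, t)) := fun f => by
    rw [← Fintype.sum_prod_type', Φ.symm.sum_comp]
  have hprod : ∀ u t, ∏ j, w (Φ.symm (u, t) j) = w u * ∏ j : {j // j ≠ i}, w (t j) := by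
    intro u t
    rw [Fintype.prod_eq_mul_prod_subtype_ne _ i]
    congr 1
    · simp [Φ]
    · exact Fintype.prod_congr _ _ fun j => by simp [Φ, j.2]
  have hcoord : ∀ u t, g (Φ.symm (u, t)) = g (Φ.symm (v, t)) :=
    fun u t => hg _ _ fun j hj => by simp [Φ, hj]
  rw [hsplit, hsplit]
  have hi : ∀ u t, Φ.symm (u, t) i = u := fun u t => by simp [Φ]
  simp only [hprod, hcoord, hi, mul_ite, mul_zero, sum_ite_irrel, sum_const_zero,
    Fintype.sum_ite_eq']
  simp only [mul_assoc, ← mul_sum, ← sum_mul, hw, one_mul]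

section Erasure

variable {n : ℕ}

noncomputable def statusWeight (ε ε₀ : ℝ) (v : Fin 3) : ℝ :=
  if v = 2 then ε else if v = 1 then ε₀ - ε else 1 - ε₀

noncomputable def erasureWeight (ε ε₀ : ℝ) (s : Fin n → Fin 3) : ℝ :=
  ∏ j, statusWeight ε ε₀ (s j)

noncomputable def unerased (s : Fin n → Fin 3) : Finset (Fin n) := {j | s j ≠ 2}

noncomputable def unerased₀ (s : Fin n → Fin 3) : Finset (Fin n) := {j | s j = 0}

theorem sum_statusWeight (ε ε₀ : ℝ) : ∑ v, statusWeight ε ε₀ v = 1 := by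
  simp [Fin.sum_univ_three, statusWeight]

theorem erasureWeight_nonneg {ε ε₀ : ℝ} (h0 : 0 ≤ ε) (h01 : ε ≤ ε₀) (h1 : ε₀ ≤ 1)
    (s : Fin n → Fin 3) : 0 ≤ erasureWeight ε ε₀ s := by
  refine prod_nonneg fun j _ => ?_
  unfold statusWeight
  split_ifs <;> linarith

theorem pCode_eq (C : Finset (Fin n → ZMod 2)) (ε ε₀ : ℝ) :
    pCode n C ε ε₀ = fun ω => unifOn C ω.1 * erasureWeight ε ε₀ ω.2 := by
  funext ω
  unfold pCode unifOn
  congr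

theorem Yeps0_eq : Yeps0 n = fun ω => reveal (unerased₀ ω.2) ω.1 := by
  funext ω j
  simp [Yeps0, reveal, unerased₀]

theorem Ynot_eq (i : Fin n) : Ynot n i = fun ω => reveal ((unerased ω.2).erase i) ω.1 := by
  funext ω j
  by_cases hj : j = i <;> simp [Ynot, Yeps, reveal, unerased, hj]

theorem erase_unerased_congr {i : Fin n} {s s' : Fin n → Fin 3}
    (h : ∀ j, j ≠ i → s j = s' j) : (unerased s).erase i = (unerased s').erase i := by
  ext j
  by_cases hj : j = i <;> simp [unerased, hj, h j]

variable (C : Finset (Fin n → ZMod 2)) {ε ε₀ : ℝ}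

theorem condEnt_Yeps0 (hq : ∀ s : Fin n → Fin 3, 0 ≤ erasureWeight ε ε₀ s) :
    condEnt (pCode n C ε ε₀) Prod.fst (Yeps0 n)
      = ∑ s, erasureWeight ε ε₀ s * codeCondEnt C (unerased₀ s) := by
  rw [pCode_eq, Yeps0_eq, condEnt_reveal C _ hq _ univ _ fun _ _ => by simp [funext_iff]]
  simp only [fun A => union_eq_left.2 (subset_univ A), codeCondEnt_univ, sub_zero]

theorem condEnt_Ynot (hq : ∀ s : Fin n → Fin 3, 0 ≤ erasureWeight ε ε₀ s) (i : Fin n) :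
    condEnt (pCode n C ε ε₀) (fun ω => ω.1 i) (Ynot n i)
      = ∑ s, erasureWeight ε ε₀ s * (codeCondEnt C ((unerased s).erase i)
          - codeCondEnt C ({i} ∪ (unerased s).erase i)) := by
  rw [pCode_eq, Ynot_eq,
    condEnt_reveal C _ hq (fun s => (unerased s).erase i) {i} _ fun _ _ => by simp]

theorem sum_exit_le_codeCondEnt (s : Fin n → Fin 3) :
    ∑ i with s i = 1, (codeCondEnt C ((unerased s).erase i)
        - codeCondEnt C ({i} ∪ (unerased s).erase i)) ≤ codeCondEnt C (unerased₀ s) := by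
  set D : Finset (Fin n) := {i | s i = 1}
  set A := unerased s
  have hDA : D ⊆ A := fun i hi => by
    simp only [D, A, unerased, mem_filter, mem_univ, true_and] at hi ⊢
    rw [hi]
    decide
  have hAD : A \ D = unerased₀ s := by
    ext j
    simp only [D, A, unerased, unerased₀, mem_sdiff, mem_filter, mem_univ, true_and]
    generalize s j = v
    fin_cases v <;> simp
  calc _ = ∑ i ∈ D, (codeCondEnt C (A.erase i) - codeCondEnt C A) :=
        sum_congr rfl fun i hi => by rw [← insert_eq, insert_erase (hDA hi)]
    _ ≤ codeCondEnt C (A \ D) - codeCondEnt C A := sum_codeCondEnt_erase_sub_le C hDA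
    _ ≤ codeCondEnt C (unerased₀ s) := by
        rw [hAD]
        linarith [codeCondEnt_nonneg C A]

end Erasure

theorem exit_entropy_bound_general (n : ℕ)
    (C : Finset (Fin n → ZMod 2))
    (ε ε₀ : ℝ) (h0 : 0 ≤ ε) (h01 : ε < ε₀) (h1 : ε₀ ≤ 1) :
    (n : ℝ) * ((1 / n) *
        ∑ i : Fin n, condEnt (pCode n C ε ε₀) (fun ω => ω.1 i) (Ynot n i))
      ≤ condEnt (pCode n C ε ε₀) Prod.fst (Yeps0 n) / (ε₀ - ε) := by
  set q := erasureWeight (n := n) ε ε₀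
  have hq := erasureWeight_nonneg (n := n) h0 h01.le h1
  set Δ : Fin n → (Fin n → Fin 3) → ℝ := fun i s =>
    codeCondEnt C ((unerased s).erase i) - codeCondEnt C ({i} ∪ (unerased s).erase i)
  -- `1 / n` is junk at `n = 0`, where the sum is empty
  have hmean : ∀ f : Fin n → ℝ, (n : ℝ) * (1 / n * ∑ i, f i) = ∑ i, f i := by
    rcases n.eq_zero_or_pos with rfl | hn
    · simp
    · intro f; field_simp
  rw [hmean, le_div_iff₀ (sub_pos.2 h01), condEnt_Yeps0 C hq, sum_mul]
  simp only [condEnt_Ynot C hq]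
  calc ∑ i, (∑ s, q s * Δ i s) * (ε₀ - ε)
      = ∑ i, ∑ s, q s * (if s i = 1 then Δ i s else 0) := by
        -- `Δ i` ignores the status of `i`, which is `1` with probability `ε₀ - ε`
        refine sum_congr rfl fun i _ => ?_
        simp only [q, erasureWeight]
        rw [sum_prod_mul_ite_eq _ (sum_statusWeight ε ε₀) i 1 (Δ i)
          fun s s' h => by simp only [Δ, erase_unerased_congr h]]
        simp [statusWeight, mul_comm]
    _ = ∑ s, q s * ∑ i with s i = 1, Δ i s := by
        rw [sum_comm]
        simp only [mul_sum, sum_filter, mul_ite, mul_zero]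
    _ ≤ ∑ s, q s * codeCondEnt C (unerased₀ s) :=
        sum_le_sum fun s _ => mul_le_mul_of_nonneg_left (sum_exit_le_codeCondEnt C s) (hq s)

/-- Entropy bound from the area theorem argument: for a uniformly chosen codeword `X`
of a code `C ⊆ 𝔽₂ⁿ` observed through degraded erasure channels `Y(ε) → Y(ε₀)` with
`ε < ε₀`, the average EXIT function `h(ε) = (1/n)Σᵢ H(Xᵢ | Y_{∼i}(ε))` satisfies
`n·h(ε) ≤ H(X | Y(ε₀)) / (ε₀ - ε)`. -/
theorem exit_entropy_bound (n : ℕ) (hn : 0 < n)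
    (C : Finset (Fin n → ZMod 2)) (hC : C.Nonempty)
    (ε ε₀ : ℝ) (h0 : 0 ≤ ε) (h01 : ε < ε₀) (h1 : ε₀ ≤ 1) :
    (n : ℝ) * ((1 / n) *
        ∑ i : Fin n, condEnt (pCode n C ε ε₀) (fun ω => ω.1 i) (Ynot n i))
      ≤ condEnt (pCode n C ε ε₀) Prod.fst (Yeps0 n) / (ε₀ - ε) :=
  exit_entropy_bound_general n C ε ε₀ h0 h01 h1
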